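/- Let S ⊆ ℝᵐ be an open convex set and F : ℝᵐ → ℝᵐ a continuously differentiable map that is pseudomonotone on S, with Jacobian matrix DF(x) at x. Then for every x ∈ S and every u ∈ ℝᵐ, if ⟪u, F(x)⟫ = 0 then ⟪u, DF(x) u⟫ ≥ 0. -/

import Mathlib

/-!
For `t > 0` we have `⟪F x, t u⟫ = 0`, so pseudomonotonicity gives `⟪F (x + t u), u⟫ ≥ 0 = ⟪F x, u⟫`
as long as `x + t u ∈ S`, which holds for small `t` since `S` is open. Thus `y ↦ ⟪u, F y⟫` is
minimal at `x` along the ray `x + t u`, and the first-order condition gives `⟪u, DF(x) u⟫ ≥ 0`.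
-/

open Matrix Filter Topology

def PseudomonotoneOn {ι : Type*} [Fintype ι] (S : Set (ι → ℝ)) (F : (ι → ℝ) → ι → ℝ) : Prop :=
  ∀ x ∈ S, ∀ y ∈ S, 0 ≤ F x ⬝ᵥ (y - x) → 0 ≤ F y ⬝ᵥ (y - x)

/-- `u` lies in the positive tangent cone at `x` of `{y | φ x ≤ φ y}`, a set on which `φ` is
minimal at `x`. -/
theorem HasFDerivAt.apply_nonneg_of_le_along_ray {E : Type*} [NormedAddCommGroup E]
    [NormedSpace ℝ E] {φ : E → ℝ} {φ' : E →L[ℝ] ℝ} {x u : E} (hφ : HasFDerivAt φ φ' x)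
    (h : ∀ᶠ t in 𝓝[>] (0 : ℝ), φ x ≤ φ (x + t • u)) : 0 ≤ φ' u :=
  IsMinOn.localize (s := {y | φ x ≤ φ y}) (fun _ hy => hy) |>.hasFDerivWithinAt_nonneg
    hφ.hasFDerivWithinAt (mem_posTangentConeAt_of_frequently_mem h.frequently)

theorem PseudomonotoneOn.dotProduct_nonneg_along_ray {ι : Type*} [Fintype ι]
    {S : Set (ι → ℝ)} {F : (ι → ℝ) → ι → ℝ} (hF : PseudomonotoneOn S F) {x u : ι → ℝ}
    (hx : x ∈ S) (hu : u ⬝ᵥ F x = 0) {t : ℝ} (ht : 0 < t) (hxt : x + t • u ∈ S) :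
    0 ≤ u ⬝ᵥ F (x + t • u) := by
  have h := hF x hx _ hxt
  simp only [add_sub_cancel_left, dotProduct_smul, smul_eq_mul, dotProduct_comm _ u, hu,
    mul_zero, le_refl, forall_const] at h
  exact nonneg_of_mul_nonneg_right h ht

theorem stmt_11_general {m : ℕ} (S : Set (Fin m → ℝ)) (hSopen : IsOpen S)
    (F : (Fin m → ℝ) → (Fin m → ℝ)) (hF : ContDiff ℝ 1 F)
    (hpseudo : ∀ x ∈ S, ∀ y ∈ S,
      0 ≤ ∑ i, F x i * (y i - x i) → 0 ≤ ∑ i, F y i * (y i - x i)) :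
    ∀ x ∈ S, ∀ u : Fin m → ℝ,
      ∑ i, u i * F x i = 0 → 0 ≤ ∑ i, u i * (fderiv ℝ F x u) i := by
  intro x hx u (hu : u ⬝ᵥ F x = 0)
  have hpm : PseudomonotoneOn S F := hpseudo
  have hD : HasFDerivAt (fun y => u ⬝ᵥ F y)
      ((dotProductBilin ℝ ℝ u).toContinuousLinearMap.comp (fderiv ℝ F x)) x :=
    (dotProductBilin ℝ ℝ u).toContinuousLinearMap.hasFDerivAt.comp x
      ((hF.differentiable one_ne_zero x).hasFDerivAt)
  have hray : ∀ᶠ t in 𝓝[>] (0 : ℝ), x + t • u ∈ S := by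
    have hcont : Continuous fun t : ℝ => x + t • u := by fun_prop
    exact nhdsWithin_le_nhds (hcont.tendsto' 0 x (by simp) |>.eventually (hSopen.mem_nhds hx))
  refine hD.apply_nonneg_of_le_along_ray ?_
  filter_upwards [hray, self_mem_nhdsWithin] with t hxt ht
  simpa only [hu] using hpm.dotProduct_nonneg_along_ray hx hu ht hxt

theorem stmt_11 {m : ℕ} (S : Set (Fin m → ℝ)) (hSopen : IsOpen S) (hSconv : Convex ℝ S)
    (F : (Fin m → ℝ) → (Fin m → ℝ)) (hF : ContDiff ℝ 1 F)
    (hpseudo : ∀ x ∈ S, ∀ y ∈ S,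
      0 ≤ ∑ i, F x i * (y i - x i) → 0 ≤ ∑ i, F y i * (y i - x i)) :
    ∀ x ∈ S, ∀ u : Fin m → ℝ,
      ∑ i, u i * F x i = 0 → 0 ≤ ∑ i, u i * (fderiv ℝ F x u) i :=
  stmt_11_general S hSopen F hF hpseudo
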